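/- Let $z_0 = (t_0, x_0)$ with $t_0 > 0$, let $0 < r < 1$ and $0 < \eta < 1$ with $s := (\eta r)^2 < t_0$, and let $w : \mathbb{R}^n \to [0,\infty)$ be measurable. Then $s^{p/2} \int_{\mathbb{R}^n} w(y)\, \rho_s(x_0 - y)\, dy \le (\eta r)^{p-n} \int_{B_r(x_0)} w(y)\, dy + C(n)\, \eta^{-n} e^{-1/(8\eta^2)}\, (s + r^2)^{p/2} \int_{\mathbb{R}^n} w(y)\, \rho_{s + r^2}(x_0 - y)\, dy$. -/

import Mathlib

open scoped ENNReal

/-- The Euclidean heat kernel `ρ_t(y) = (4πt)^{-n/2} exp(-|y|²/(4t))`. -/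
noncomputable def heatK (n : ℕ) (t : ℝ) (y : EuclideanSpace ℝ (Fin n)) : ℝ :=
  (4 * Real.pi * t) ^ (-(n : ℝ) / 2) * Real.exp (-‖y‖ ^ 2 / (4 * t))

lemma heatK_nonneg (n : ℕ) {t : ℝ} (ht : 0 < t) (y : EuclideanSpace ℝ (Fin n)) :
    0 ≤ heatK n t y := by
  unfold heatK
  have : (0:ℝ) < 4 * Real.pi * t := by positivity
  positivity

lemma lemA (n : ℕ) {p η r : ℝ} (hη : 0 < η) (hr : 0 < r)
    (z : EuclideanSpace ℝ (Fin n)) :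
    ((η*r)^2)^(p/2) * heatK n ((η*r)^2) z ≤ (η*r)^(p - n) := by
  have hηr : 0 < η * r := mul_pos hη hr
  have hs : (0:ℝ) < (η*r)^2 := by positivity
  have h1 : Real.exp (-‖z‖^2 / (4*((η*r)^2))) ≤ 1 := by
    rw [Real.exp_le_one_iff]
    apply div_nonpos_of_nonpos_of_nonneg
    · nlinarith [sq_nonneg ‖z‖]
    · positivity
  have h2 : (4*Real.pi*((η*r)^2)) ^ (-(n:ℝ)/2) ≤ ((η*r)^2 : ℝ) ^ (-(n:ℝ)/2) := by
    apply Real.rpow_le_rpow_of_nonpos hs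
    · nlinarith [Real.pi_gt_three]
    · apply div_nonpos_of_nonpos_of_nonneg
      · nlinarith [sq_nonneg ‖z‖]
      · positivity
  calc ((η*r)^2)^(p/2) * heatK n ((η*r)^2) z
      ≤ ((η*r)^2)^(p/2) * (((η*r)^2 : ℝ) ^ (-(n:ℝ)/2) * 1) := by
        unfold heatK; gcongr
    _ = (η*r)^(p - n) := by
        rw [mul_one, ← Real.rpow_add hs, ← Real.rpow_natCast (η*r) 2,
          ← Real.rpow_mul hηr.le]
        congr 1
        ring

lemma lemB (n : ℕ) {p η r : ℝ} (hp : 2 ≤ p) (hη : 0 < η) (hη1 : η < 1) (hr : 0 < r)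
    (z : EuclideanSpace ℝ (Fin n)) (hz : r ≤ ‖z‖) :
    ((η*r)^2)^(p/2) * heatK n ((η*r)^2) z ≤
      (2 ^ ((n:ℝ)/2) * η ^ (-(n:ℝ)) * Real.exp (-1/(8*η^2)) * ((η*r)^2 + r^2)^(p/2)) *
        heatK n ((η*r)^2 + r^2) z := by
  have hηr : 0 < η * r := mul_pos hη hr
  have hs : (0:ℝ) < (η*r)^2 := by positivity
  have ha : (0:ℝ) < (η*r)^2 + r^2 := by positivity
  have hA : ((η*r)^2)^(p/2) ≤ ((η*r)^2 + r^2)^(p/2) :=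
    Real.rpow_le_rpow hs.le (by nlinarith) (by linarith)
  have hB : (4*Real.pi*((η*r)^2)) ^ (-(n:ℝ)/2) ≤
      2 ^ ((n:ℝ)/2) * η ^ (-(n:ℝ)) * (4*Real.pi*((η*r)^2 + r^2)) ^ (-(n:ℝ)/2) := by
    have key : (η^2/2) * (4*Real.pi*((η*r)^2 + r^2)) ≤ 4*Real.pi*((η*r)^2) := by
      have h1 : η^2 ≤ 1 := by nlinarith
      nlinarith [Real.pi_pos, mul_nonneg (mul_nonneg (mul_nonneg Real.pi_pos.le (sq_nonneg η)) (sq_nonneg r)) (by nlinarith : (0:ℝ) ≤ 1 - η^2)]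
    have h0 : (4*Real.pi*((η*r)^2)) ^ (-(n:ℝ)/2) ≤
        ((η^2/2) * (4*Real.pi*((η*r)^2 + r^2))) ^ (-(n:ℝ)/2) := by
      apply Real.rpow_le_rpow_of_nonpos (by positivity) key
      apply div_nonpos_of_nonpos_of_nonneg
      · simp
      · norm_num
    have h1 : ((η^2/2) * (4*Real.pi*((η*r)^2 + r^2))) ^ (-(n:ℝ)/2) =
        (η^2/2 : ℝ) ^ (-(n:ℝ)/2) * (4*Real.pi*((η*r)^2 + r^2)) ^ (-(n:ℝ)/2) :=
      Real.mul_rpow (by positivity) (by positivity)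
    have h2 : (η^2/2 : ℝ) ^ (-(n:ℝ)/2) = 2 ^ ((n:ℝ)/2) * η ^ (-(n:ℝ)) := by
      rw [Real.div_rpow (by positivity) (by norm_num), ← Real.rpow_natCast η 2,
        ← Real.rpow_mul hη.le]
      rw [show ((2:ℕ):ℝ) * (-(n:ℝ)/2) = -(n:ℝ) by push_cast; ring]
      rw [show (-(n:ℝ)/2) = -((n:ℝ)/2) by ring, Real.rpow_neg (by norm_num : (0:ℝ) ≤ 2)]
      field_simp
    calc (4*Real.pi*((η*r)^2)) ^ (-(n:ℝ)/2) ≤ _ := h0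
      _ = _ := by rw [h1, h2]
  have hC : Real.exp (-‖z‖^2 / (4*((η*r)^2))) ≤
      Real.exp (-1/(8*η^2)) * Real.exp (-‖z‖^2 / (4*((η*r)^2 + r^2))) := by
    rw [← Real.exp_add, Real.exp_le_exp]
    have hM : r^2 ≤ ‖z‖^2 := by nlinarith [norm_nonneg z]
    rw [div_add_div _ _ (by positivity : (8*η^2:ℝ) ≠ 0) (by positivity : (4*((η*r)^2 + r^2):ℝ) ≠ 0),
      div_le_div_iff₀ (by positivity) (by positivity)]
    ring_nf
    have h1 : η^2 ≤ 1 := by nlinarith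
    nlinarith [mul_le_mul_of_nonneg_left hM (by positivity : (0:ℝ) ≤ 16*η^2*r^2),
      mul_le_mul_of_nonneg_left h1 (by positivity : (0:ℝ) ≤ 16*η^2*r^4)]
  calc ((η*r)^2)^(p/2) * heatK n ((η*r)^2) z
      = ((η*r)^2)^(p/2) * (4*Real.pi*((η*r)^2)) ^ (-(n:ℝ)/2) *
          Real.exp (-‖z‖^2 / (4*((η*r)^2))) := by unfold heatK; ring
    _ ≤ ((η*r)^2 + r^2)^(p/2) *
          (2 ^ ((n:ℝ)/2) * η ^ (-(n:ℝ)) * (4*Real.pi*((η*r)^2 + r^2)) ^ (-(n:ℝ)/2)) *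
          (Real.exp (-1/(8*η^2)) * Real.exp (-‖z‖^2 / (4*((η*r)^2 + r^2)))) := by
        have h4 : (0:ℝ) < 4*Real.pi*((η*r)^2) := by positivity
        gcongr <;> positivity
    _ = _ := by unfold heatK; ring

/-- there is `C = C(n)` such that for any nonnegative measurable density
`w`, any `t₀ > 0`, `0 < r < 1`, `0 < η < 1` with `s := (ηr)² < t₀`, the Gaussian-weighted
scale-invariant quantity is controlled by the local energy plus a Gaussian tail:
`s^{p/2} ∫ w(y) ρ_s(x₀-y) dy ≤ (ηr)^{p-n} ∫_{B_r(x₀)} w + C η^{-n} e^{-1/(8η²)} (s+r²)^{p/2} ∫ w(y) ρ_{s+r²}(x₀-y) dy`. -/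
theorem stmt_12 (n : ℕ) :
    ∃ C > 0, ∀ (p t₀ r η : ℝ) (x₀ : EuclideanSpace ℝ (Fin n))
      (w : EuclideanSpace ℝ (Fin n) → ℝ≥0∞), Measurable w →
      2 ≤ p → 0 < t₀ → 0 < r → r < 1 → 0 < η → η < 1 → (η * r) ^ 2 < t₀ →
      ENNReal.ofReal (((η * r) ^ 2) ^ (p / 2)) *
          ∫⁻ y, w y * ENNReal.ofReal (heatK n ((η * r) ^ 2) (x₀ - y))
        ≤ ENNReal.ofReal ((η * r) ^ (p - (n : ℝ))) * (∫⁻ y in Metric.ball x₀ r, w y)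
          + ENNReal.ofReal (C * η ^ (-(n : ℝ)) * Real.exp (-1 / (8 * η ^ 2)) *
                ((η * r) ^ 2 + r ^ 2) ^ (p / 2)) *
              ∫⁻ y, w y * ENNReal.ofReal (heatK n ((η * r) ^ 2 + r ^ 2) (x₀ - y)) := by
  refine ⟨2 ^ ((n:ℝ)/2), by positivity, ?_⟩
  intro p t₀ r η x₀ w hw hp ht₀ hr hr1 hη hη1 hst
  have hηr : 0 < η * r := mul_pos hη hr
  have hs : (0:ℝ) < (η*r)^2 := by positivity
  have ha : (0:ℝ) < (η*r)^2 + r^2 := by positivity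
  set c : ℝ≥0∞ := ENNReal.ofReal (((η * r) ^ 2) ^ (p / 2)) with hc
  have hcne : c ≠ ⊤ := ENNReal.ofReal_ne_top
  set K : ℝ≥0∞ := ENNReal.ofReal (2 ^ ((n:ℝ)/2) * η ^ (-(n : ℝ)) * Real.exp (-1 / (8 * η ^ 2)) *
      ((η * r) ^ 2 + r ^ 2) ^ (p / 2)) with hK
  rw [← MeasureTheory.lintegral_const_mul' c _ hcne]
  rw [show (∫⁻ y, c * (w y * ENNReal.ofReal (heatK n ((η * r) ^ 2) (x₀ - y)))) =
      (∫⁻ y in Metric.ball x₀ r, c * (w y * ENNReal.ofReal (heatK n ((η * r) ^ 2) (x₀ - y)))) +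
      (∫⁻ y in (Metric.ball x₀ r)ᶜ, c * (w y * ENNReal.ofReal (heatK n ((η * r) ^ 2) (x₀ - y))))
    from (MeasureTheory.lintegral_add_compl _ measurableSet_ball).symm]
  have h1 : (∫⁻ y in Metric.ball x₀ r,
        c * (w y * ENNReal.ofReal (heatK n ((η * r) ^ 2) (x₀ - y)))) ≤
      ENNReal.ofReal ((η * r) ^ (p - (n : ℝ))) * ∫⁻ y in Metric.ball x₀ r, w y := by
    rw [← MeasureTheory.lintegral_const_mul' _ _ (ENNReal.ofReal_ne_top)]
    apply MeasureTheory.setLIntegral_mono' measurableSet_ball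
    intro y _
    calc c * (w y * ENNReal.ofReal (heatK n ((η * r) ^ 2) (x₀ - y)))
        = (c * ENNReal.ofReal (heatK n ((η * r) ^ 2) (x₀ - y))) * w y := by ring
      _ ≤ ENNReal.ofReal ((η * r) ^ (p - (n : ℝ))) * w y := by
          gcongr
          rw [hc, ← ENNReal.ofReal_mul (by positivity)]
          exact ENNReal.ofReal_le_ofReal (lemA n hη hr (x₀ - y))
  have h2 : (∫⁻ y in (Metric.ball x₀ r)ᶜ,
        c * (w y * ENNReal.ofReal (heatK n ((η * r) ^ 2) (x₀ - y)))) ≤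
      K * ∫⁻ y, w y * ENNReal.ofReal (heatK n ((η * r) ^ 2 + r ^ 2) (x₀ - y)) := by
    calc (∫⁻ y in (Metric.ball x₀ r)ᶜ,
          c * (w y * ENNReal.ofReal (heatK n ((η * r) ^ 2) (x₀ - y))))
        ≤ ∫⁻ y in (Metric.ball x₀ r)ᶜ,
          K * (w y * ENNReal.ofReal (heatK n ((η * r) ^ 2 + r ^ 2) (x₀ - y))) := by
          apply MeasureTheory.setLIntegral_mono' measurableSet_ball.compl
          intro y hy
          have hdist : r ≤ ‖x₀ - y‖ := by
            rw [Set.mem_compl_iff, Metric.mem_ball, not_lt] at hy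
            rw [← dist_eq_norm, dist_comm]
            exact hy
          calc c * (w y * ENNReal.ofReal (heatK n ((η * r) ^ 2) (x₀ - y)))
              = (c * ENNReal.ofReal (heatK n ((η * r) ^ 2) (x₀ - y))) * w y := by ring
            _ ≤ (K * ENNReal.ofReal (heatK n ((η * r) ^ 2 + r ^ 2) (x₀ - y))) * w y := by
                apply mul_le_mul_left
                rw [hc, hK, ← ENNReal.ofReal_mul (by positivity),
                  ← ENNReal.ofReal_mul (by positivity)]
                exact ENNReal.ofReal_le_ofReal (lemB n hp hη hη1 hr (x₀ - y) hdist)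
            _ = K * (w y * ENNReal.ofReal (heatK n ((η * r) ^ 2 + r ^ 2) (x₀ - y))) := by ring
      _ = K * ∫⁻ y in (Metric.ball x₀ r)ᶜ,
            w y * ENNReal.ofReal (heatK n ((η * r) ^ 2 + r ^ 2) (x₀ - y)) :=
          MeasureTheory.lintegral_const_mul' _ _ ENNReal.ofReal_ne_top
      _ ≤ K * ∫⁻ y, w y * ENNReal.ofReal (heatK n ((η * r) ^ 2 + r ^ 2) (x₀ - y)) := by
          gcongr
          exact MeasureTheory.Measure.restrict_le_self
  exact add_le_add h1 h2
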